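/- Let γ ≥ 0 be a real number and define h(λ) = ln(1 + λ) − λ + (1 + λ)·γ/(1 + γ) for λ ≥ 0, where ln is the natural logarithm. Then h attains its maximum over [0, ∞) uniquely at λ = γ, and the maximum value is h(γ) = ln(1 + γ). -/

import Mathlib

open Real

/-- Scalar Lagrangian dual transform underlying the FP reformulation (18)–(19):
`h(λ) = ln(1+λ) − λ + (1+λ)γ/(1+γ)` attains its maximum over `[0,∞)` uniquely
at `λ = γ`, with maximum value `ln(1+γ)`. -/
theorem fp_dual_transform_scalar
    (γ : ℝ) (hγ : 0 ≤ γ)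
    (h : ℝ → ℝ)
    (hh : ∀ l, h l = Real.log (1 + l) - l + (1 + l) * γ / (1 + γ)) :
    (∀ l, 0 ≤ l → h l ≤ h γ)
    ∧ (∀ l, 0 ≤ l → l ≠ γ → h l < h γ)
    ∧ h γ = Real.log (1 + γ) := by
  have h1γ : (0:ℝ) < 1 + γ := by linarith
  have key : ∀ l : ℝ, 0 ≤ l →
      h l - h γ = Real.log ((1 + l) / (1 + γ)) - ((1 + l) / (1 + γ) - 1) := by
    intro l hl
    have h1l : (0:ℝ) < 1 + l := by linarith
    rw [hh, hh, Real.log_div (ne_of_gt h1l) (ne_of_gt h1γ)]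
    field_simp
    ring
  refine ⟨?_, ?_, ?_⟩
  · intro l hl
    have hx : 0 < (1 + l) / (1 + γ) := div_pos (by linarith) h1γ
    have := Real.log_le_sub_one_of_pos hx
    have hk := key l hl
    linarith
  · intro l hl hne
    have hx : 0 < (1 + l) / (1 + γ) := div_pos (by linarith) h1γ
    have hx1 : (1 + l) / (1 + γ) ≠ 1 := by
      intro hc
      apply hne
      have := (div_eq_one_iff_eq (ne_of_gt h1γ)).mp hc
      linarith
    have := Real.log_lt_sub_one_of_pos hx hx1
    have hk := key l hl
    linarith
  · rw [hh]
    field_simp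
    ring
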